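/- arXiv:1805.02126 — 3 statements merged into one kernel-verified Lean document; each statement's English description precedes it below -/
import Mathlib

section
/- Let $t\geq 2$ and for $1\leq i,j\leq t-1$ set $b_{i,j} = \binom{2j}{2i} - \binom{2j}{2t-2i}$ (with $\binom{n}{k}=0$ if $k>n$ or $k<0$). Then for every $j$ with $1\leq j\leq t-1$, $\sum_{i=1}^{t-1} |b_{i,j}| < 2^{2j+1} - 1$. -/
/-!
Bound each entry by `|a - b| ≤ a + b`. The indices `2i` and `2t - 2i` for `1 ≤ i ≤ t - 1` are
distinct and nonzero, so each of the two resulting sums is part of the row sum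
`∑ₖ C(2j, k) = 2^(2j)` with the term `k = 0` missing, i.e. at most `2^(2j) - 1`. Together this
gives `2^(2j+1) - 2`.
-/

open Finset

lemma Nat.sum_choose_add_one_le_two_pow (n : ℕ) {T : Finset ℕ} (hT : 0 ∉ T) :
    ∑ k ∈ T, n.choose k + 1 ≤ 2 ^ n := by
  calc ∑ k ∈ T, n.choose k + 1 = ∑ k ∈ insert 0 T, n.choose k := by
        rw [sum_insert hT, Nat.choose_zero_right, add_comm]
    _ ≤ ∑ k ∈ range (n + 1), n.choose k :=
        sum_le_sum_of_ne_zero fun k _ hk =>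
          mem_range_succ_iff.2 (not_lt.1 (mt Nat.choose_eq_zero_of_lt hk))
    _ = 2 ^ n := Nat.sum_range_choose n

lemma Nat.sum_choose_comp_add_one_le_two_pow (n : ℕ) {S : Finset ℕ} {g : ℕ → ℕ}
    (hg : Set.InjOn g S) (hg0 : ∀ i ∈ S, g i ≠ 0) :
    ∑ i ∈ S, n.choose (g i) + 1 ≤ 2 ^ n := by
  rw [← sum_image hg]
  refine Nat.sum_choose_add_one_le_two_pow n fun h => ?_
  obtain ⟨i, hi, hgi⟩ := mem_image.1 h
  exact hg0 i hi hgi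

lemma Int.abs_natCast_sub_natCast_le_add (a b : ℕ) : |(a : ℤ) - b| ≤ a + b :=
  abs_sub_le_iff.2 ⟨by omega, by omega⟩

theorem stmt_3_general (t : ℕ) (j : ℕ) :
    ∑ i ∈ Finset.Icc 1 (t - 1),
        |(Nat.choose (2 * j) (2 * i) : ℤ) - (Nat.choose (2 * j) (2 * t - 2 * i) : ℤ)|
      < 2 ^ (2 * j + 1) - 1 := by
  have h_even : ∑ i ∈ Icc 1 (t - 1), (2 * j).choose (2 * i) + 1 ≤ 2 ^ (2 * j) :=
    Nat.sum_choose_comp_add_one_le_two_pow _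
      (fun a _ b _ hab => by simpa using hab) (fun i hi => by rw [mem_Icc] at hi; omega)
  have h_refl : ∑ i ∈ Icc 1 (t - 1), (2 * j).choose (2 * t - 2 * i) + 1 ≤ 2 ^ (2 * j) :=
    Nat.sum_choose_comp_add_one_le_two_pow _
      (fun a ha b hb hab => by rw [coe_Icc, Set.mem_Icc] at ha hb; omega)
      (fun i hi => by rw [mem_Icc] at hi; omega)
  have h_abs := sum_le_sum fun i (_ : i ∈ Icc 1 (t - 1)) =>
    Int.abs_natCast_sub_natCast_le_add ((2 * j).choose (2 * i)) ((2 * j).choose (2 * t - 2 * i))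
  rw [sum_add_distrib] at h_abs
  zify at h_even h_refl
  rw [pow_succ]
  linarith

theorem stmt_3 (t : ℕ) (ht : 2 ≤ t) (j : ℕ) (hj : 1 ≤ j) (hj' : j ≤ t - 1) :
    ∑ i ∈ Finset.Icc 1 (t - 1),
        |(Nat.choose (2 * j) (2 * i) : ℤ) - (Nat.choose (2 * j) (2 * t - 2 * i) : ℤ)|
      < 2 ^ (2 * j + 1) - 1 :=
  stmt_3_general t j
end

section
/- Let $t\geq 2$ and define the $(t-1)\times(t-1)$ rational matrix $M=(a_{i,j})$ by $a_{i,j} = \binom{2j}{2i} - \binom{2j}{2t-2i} + \delta_{i,j}(1-2^{2j+1})$, where $\delta_{i,j}$ is the Kronecker delta and $\binom{n}{k}=0$ if $k>n$ or $k<0$. Then $\det M \neq 0$. -/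
open Finset

private lemma sum_range_choose_le' (m L : ℕ) : ∑ k ∈ Finset.range L, m.choose k ≤ 2 ^ m := by
  calc ∑ k ∈ Finset.range L, m.choose k
      ≤ ∑ k ∈ Finset.range (L + (m + 1)), m.choose k :=
        Finset.sum_le_sum_of_subset (Finset.range_subset_range.2 (Nat.le_add_right _ _))
    _ = ∑ k ∈ Finset.range (m + 1), m.choose k := by
        refine (Finset.sum_subset (Finset.range_subset_range.2 (Nat.le_add_left _ _)) ?_).symm
        intro x hx hx'
        exact Nat.choose_eq_zero_of_lt (by simpa using hx')
    _ = 2 ^ m := Nat.sum_range_choose m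

private lemma pair_sum (m s : ℕ) :
    ∑ i ∈ Finset.range s, (m.choose (2 * i + 1) + m.choose (2 * i + 2))
      = ∑ k ∈ Finset.range (2 * s), m.choose (k + 1) := by
  induction s with
  | zero => simp
  | succ n ih =>
    rw [Finset.sum_range_succ, ih, show 2 * (n + 1) = (2 * n + 1) + 1 by ring,
      Finset.sum_range_succ, Finset.sum_range_succ]
    simp only [show 2 * n + 1 + 1 = 2 * n + 2 from rfl]
    omega

/-- Key bound: the sum of binomial coefficients `(m+1).choose (2*(i+1))` over `i < s`
is at most `2 ^ m - 1`. -/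
private lemma key_sum (m s : ℕ) :
    1 + ∑ i ∈ Finset.range s, (m + 1).choose (2 * (i + 1)) ≤ 2 ^ m := by
  have h1 : ∑ i ∈ Finset.range s, (m + 1).choose (2 * (i + 1))
      ≤ ∑ i ∈ Finset.range s, (m.choose (2 * i + 1) + m.choose (2 * i + 2)) := by
    refine Finset.sum_le_sum fun i _ => ?_
    have : 2 * (i + 1) = (2 * i + 1) + 1 := by ring
    rw [this, Nat.choose_succ_succ']
  have h2 := pair_sum m s
  have h3 : 1 + ∑ k ∈ Finset.range (2 * s), m.choose (k + 1)
      = ∑ k ∈ Finset.range (2 * s + 1), m.choose k := by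
    rw [Finset.sum_range_succ' (fun k => m.choose k) (2 * s)]
    simp [add_comm]
  have h4 := sum_range_choose_le' m (2 * s + 1)
  omega

/-- Reflection: the second family of binomial coefficients is the same sum. -/
private lemma reflect_sum (n s : ℕ) :
    ∑ i ∈ Finset.range s, n.choose (2 * s - 2 * i) = ∑ i ∈ Finset.range s, n.choose (2 * (i + 1)) := by
  rw [← Finset.sum_range_reflect (fun i => n.choose (2 * (i + 1))) s]
  refine Finset.sum_congr rfl fun i hi => ?_
  have hi' := Finset.mem_range.1 hi
  congr 1
  omega

theorem stmt_4 (t : ℕ) (ht : 2 ≤ t)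
    (M : Matrix (Fin (t - 1)) (Fin (t - 1)) ℚ)
    (hM : ∀ i j : Fin (t - 1),
      M i j = (Nat.choose (2 * (j.val + 1)) (2 * (i.val + 1)) : ℚ)
        - (Nat.choose (2 * (j.val + 1)) (2 * t - 2 * (i.val + 1)) : ℚ)
        + (if i = j then 1 - 2 ^ (2 * (j.val + 1) + 1) else 0)) :
    M.det ≠ 0 := by
  apply det_ne_zero_of_sum_col_lt_diag
  intro k
  set j : ℕ := k.val + 1 with hj
  set n : ℕ := 2 * j with hn
  -- norm on ℚ is the cast of abs
  have hnorm : ∀ q : ℚ, ‖q‖ = ((|q| : ℚ) : ℝ) := fun q => by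
    rw [← Rat.norm_cast_real, Real.norm_eq_abs, Rat.cast_abs]
  -- the diagonal entry
  have hdiag : |M k k| ≥ (2 : ℚ) ^ (n + 1) - 2 := by
    rw [hM k k]
    simp only [if_pos rfl]
    have h1 : (Nat.choose (2 * (k.val + 1)) (2 * (k.val + 1)) : ℚ) = 1 := by
      rw [Nat.choose_self]; norm_num
    rw [h1]
    set c : ℚ := (Nat.choose (2 * (k.val + 1)) (2 * t - 2 * (k.val + 1)) : ℚ) with hc
    have hc0 : 0 ≤ c := by positivity
    have : -(1 - c + (1 - 2 ^ (2 * (k.val + 1) + 1))) = 2 ^ (n + 1) + c - 2 := by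
      rw [hn, hj]; ring
    calc (2:ℚ) ^ (n+1) - 2 ≤ 2 ^ (n + 1) + c - 2 := by linarith
      _ = -(1 - c + (1 - 2 ^ (2 * (k.val + 1) + 1))) := this.symm
      _ ≤ |1 - c + (1 - 2 ^ (2 * (k.val + 1) + 1))| := neg_le_abs _
  -- bound the off-diagonal column sum
  have hoff : ∑ i ∈ Finset.univ.erase k, |M i k|
      ≤ ∑ i : Fin (t - 1), ((Nat.choose n (2 * (i.val + 1)) : ℚ)
          + (Nat.choose n (2 * t - 2 * (i.val + 1)) : ℚ)) := by
    refine le_trans (Finset.sum_le_sum fun i hi => ?_)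
      (Finset.sum_le_sum_of_subset_of_nonneg (Finset.subset_univ _) fun i _ _ => by positivity)
    have hik : i ≠ k := Finset.ne_of_mem_erase hi
    rw [hM i k, if_neg hik, add_zero]
    calc |(Nat.choose (2 * (k.val + 1)) (2 * (i.val + 1)) : ℚ)
          - (Nat.choose (2 * (k.val + 1)) (2 * t - 2 * (i.val + 1)) : ℚ)|
        ≤ |(Nat.choose (2 * (k.val + 1)) (2 * (i.val + 1)) : ℚ)|
          + |(Nat.choose (2 * (k.val + 1)) (2 * t - 2 * (i.val + 1)) : ℚ)| := abs_sub _ _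
      _ = (Nat.choose n (2 * (i.val + 1)) : ℚ) + (Nat.choose n (2 * t - 2 * (i.val + 1)) : ℚ) := by
          rw [abs_of_nonneg (by positivity), abs_of_nonneg (by positivity)]
  -- the two binomial sums, each at most 2^(n-1) - 1 = 2^(2j-1) - 1
  have hsum1 : ∑ i : Fin (t - 1), (Nat.choose n (2 * (i.val + 1)) : ℚ) ≤ 2 ^ (2 * k.val + 1) - 1 := by
    have := key_sum (2 * k.val + 1) (t - 1)
    have hcast : ((1 + ∑ i ∈ Finset.range (t - 1), (2 * k.val + 1 + 1).choose (2 * (i + 1)) : ℕ) : ℚ)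
        ≤ ((2 ^ (2 * k.val + 1) : ℕ) : ℚ) := Nat.cast_le.2 this
    push_cast at hcast
    rw [Fin.sum_univ_eq_sum_range (fun i => (Nat.choose n (2 * (i + 1)) : ℚ)) (t - 1)]
    have hne : n = 2 * k.val + 1 + 1 := by rw [hn, hj]; ring
    rw [hne]
    linarith
  have hsum2 : ∑ i : Fin (t - 1), (Nat.choose n (2 * t - 2 * (i.val + 1)) : ℚ)
      ≤ 2 ^ (2 * k.val + 1) - 1 := by
    have hkey : ∑ i ∈ Finset.range (t - 1), Nat.choose n (2 * t - 2 * (i + 1))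
        = ∑ i ∈ Finset.range (t - 1), Nat.choose n (2 * (t - 1) - 2 * i) := by
      refine Finset.sum_congr rfl fun i hi => ?_
      have := Finset.mem_range.1 hi
      congr 1
      omega
    have h2 := reflect_sum n (t - 1)
    have := key_sum (2 * k.val + 1) (t - 1)
    have hne : n = 2 * k.val + 1 + 1 := by rw [hn, hj]; ring
    have hfin : ∑ i ∈ Finset.range (t - 1), Nat.choose n (2 * t - 2 * (i + 1))
        ≤ 2 ^ (2 * k.val + 1) - 1 := by
      rw [hkey, h2, hne]; omega
    have hcast : ((∑ i ∈ Finset.range (t - 1), Nat.choose n (2 * t - 2 * (i + 1)) : ℕ) : ℚ)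
        ≤ ((2 ^ (2 * k.val + 1) - 1 : ℕ) : ℚ) := Nat.cast_le.2 hfin
    rw [Fin.sum_univ_eq_sum_range (fun i => (Nat.choose n (2 * t - 2 * (i + 1)) : ℚ)) (t - 1)]
    push_cast at hcast
    rw [Nat.cast_sub (Nat.one_le_two_pow)] at hcast
    push_cast at hcast
    linarith
  -- put it together over ℚ, then cast to ℝ
  have hQ : ∑ i ∈ Finset.univ.erase k, |M i k| < |M k k| := by
    have hsum : ∑ i : Fin (t - 1), ((Nat.choose n (2 * (i.val + 1)) : ℚ)
        + (Nat.choose n (2 * t - 2 * (i.val + 1)) : ℚ)) ≤ 2 ^ n - 2 := by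
      rw [Finset.sum_add_distrib]
      have hnpow : (2:ℚ) ^ n = 2 ^ (2 * k.val + 1) + 2 ^ (2 * k.val + 1) := by
        rw [hn, hj, show 2 * (k.val + 1) = (2 * k.val + 1) + 1 by ring, pow_succ]
        ring
      linarith
    have hlt : (2:ℚ) ^ n - 2 < 2 ^ (n + 1) - 2 := by
      have : (2:ℚ) ^ n < 2 ^ (n + 1) := by
        rw [pow_succ]
        have : (0:ℚ) < 2 ^ n := by positivity
        linarith
      linarith
    calc ∑ i ∈ Finset.univ.erase k, |M i k| ≤ _ := hoff
      _ ≤ 2 ^ n - 2 := hsum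
      _ < 2 ^ (n + 1) - 2 := hlt
      _ ≤ |M k k| := hdiag
  calc ∑ i ∈ Finset.univ.erase k, ‖M i k‖
      = ((∑ i ∈ Finset.univ.erase k, |M i k| : ℚ) : ℝ) := by
        rw [Rat.cast_sum]; exact Finset.sum_congr rfl fun i _ => hnorm _
    _ < ((|M k k| : ℚ) : ℝ) := by exact_mod_cast hQ
    _ = ‖M k k‖ := (hnorm _).symm
end

section
/- Let $N\geq 4$ be an even integer and for odd $n_1,n_2\geq 1$ with $n_1+n_2=N$ and odd $2n+1$ with $1\leq 2n+1\leq N-3$, set $s=N-2n-2$ and define $c(n_1,n_2;2n+1) = \binom{2n}{n_1-1} - \binom{2n}{n_2-1} + \delta_{2n,n_1-1}(1-2^{2n+1})$, where $\delta$ is the Kronecker delta and $\binom{a}{b}=0$ if $b>a$ or $b<0$. Then for each fixed odd $2n+1$ with $3\leq 2n+1\leq N-3$, $\left|c(2n+1, N-2n-1; 2n+1)\right| > \sum_{\substack{n_1\ \mathrm{odd},\ 3\leq n_1\leq N-3 \\ n_1\neq 2n+1}} \left|c(n_1, N-n_1; 2n+1)\right|$. -/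
/-!
Off the diagonal the Kronecker term vanishes, so `|c(n₁, N - n₁; 2n+1)|` is at most
`C(2n, n₁ - 1) + C(2n, N - n₁ - 1)`. As `n₁` runs over odd numbers and `N` is even, both
`n₁ - 1` and `N - n₁ - 1` run injectively over even numbers, so each of the two sums is bounded by
the sum of the even-indexed binomial coefficients `C(2n, k)`, which is `2^(2n-1)`. The off-diagonal
sum is therefore at most `2^(2n)`, while the diagonal entry has absolute value at least
`2^(2n+1) - 2`.
-/

/-- Entry `c(n₁, n₂; 2n+1) = C(2n, n₁-1) - C(2n, n₂-1) + δ_{2n, n₁-1}(1 - 2^{2n+1})`. -/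
def cEntry (n₁ n₂ n : ℕ) : ℤ :=
  (Nat.choose (2 * n) (n₁ - 1) : ℤ) - (Nat.choose (2 * n) (n₂ - 1) : ℤ)
    + (if 2 * n = n₁ - 1 then 1 - 2 ^ (2 * n + 1) else 0)

open Finset

theorem Nat.sum_range_choose_filter_even {m : ℕ} (hm : m ≠ 0) :
    ∑ k ∈ (range (m + 1)).filter Even, m.choose k = 2 ^ (m - 1) := by
  have hweight : ∀ k : ℕ, (1 + (-1 : ℤ) ^ k) = if Even k then 2 else 0 := by
    intro k
    rcases k.even_or_odd with hk | hk
    · rw [hk.neg_one_pow, if_pos hk]; norm_num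
    · rw [hk.neg_one_pow, if_neg (Nat.not_even_iff_odd.mpr hk)]; norm_num
  have htotal : ∑ k ∈ range (m + 1), (1 + (-1 : ℤ) ^ k) * m.choose k = 2 ^ m := by
    simp only [add_mul, one_mul, sum_add_distrib, Int.alternating_sum_range_choose_of_ne hm,
      add_zero]
    exact_mod_cast Nat.sum_range_choose m
  simp only [hweight, ite_mul, zero_mul, ← sum_filter, ← mul_sum] at htotal
  have hpow : (2 : ℤ) ^ m = 2 * 2 ^ (m - 1) := by
    rw [← _root_.pow_succ', Nat.sub_add_cancel (Nat.one_le_iff_ne_zero.mpr hm)]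
  exact_mod_cast mul_left_cancel₀ two_ne_zero (htotal.trans hpow)

theorem Nat.sum_choose_le_of_injOn_even {ι : Type*} {m : ℕ} {s : Finset ι} {f : ι → ℕ}
    (hf : Set.InjOn f s) (heven : ∀ i ∈ s, Even (f i)) (hm : m ≠ 0) :
    ∑ i ∈ s, m.choose (f i) ≤ 2 ^ (m - 1) := by
  rw [← sum_image hf, ← Nat.sum_range_choose_filter_even hm]
  refine sum_le_sum_of_ne_zero fun k hk hne => ?_
  obtain ⟨i, hi, rfl⟩ := mem_image.mp hk
  refine mem_filter.mpr ⟨mem_range.mpr ?_, heven i hi⟩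
  by_contra hlt
  exact hne (Nat.choose_eq_zero_of_lt (by omega))

theorem cEntry_of_ne {n₁ n₂ n : ℕ} (h : 2 * n ≠ n₁ - 1) :
    cEntry n₁ n₂ n = ((2 * n).choose (n₁ - 1) : ℤ) - (2 * n).choose (n₂ - 1) := by
  simp [cEntry, h]

theorem abs_cEntry_le_of_ne {n₁ n₂ n : ℕ} (h : 2 * n ≠ n₁ - 1) :
    |cEntry n₁ n₂ n| ≤ (((2 * n).choose (n₁ - 1) + (2 * n).choose (n₂ - 1) : ℕ) : ℤ) := by
  rw [cEntry_of_ne h]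
  simpa using abs_sub ((2 * n).choose (n₁ - 1) : ℤ) ((2 * n).choose (n₂ - 1))

theorem cEntry_diag (n₂ n : ℕ) :
    cEntry (2 * n + 1) n₂ n = 2 - (2 * n).choose (n₂ - 1) - 2 ^ (2 * n + 1) := by
  simp only [cEntry, Nat.add_sub_cancel, if_true, Nat.choose_self, Nat.cast_one]
  ring

theorem two_pow_sub_two_le_abs_cEntry_diag (n₂ n : ℕ) :
    2 ^ (2 * n + 1) - 2 ≤ |cEntry (2 * n + 1) n₂ n| := by
  refine le_trans ?_ (neg_le_abs _)
  rw [cEntry_diag]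
  linarith [((2 * n).choose (n₂ - 1)).cast_nonneg (α := ℤ)]

theorem stmt_17_general (N : ℕ) (hNeven : Even N) (n : ℕ)
    (h1 : 3 ≤ 2 * n + 1) :
    ∑ n₁ ∈ (Finset.Icc 3 (N - 3)).filter (fun n₁ => Odd n₁ ∧ n₁ ≠ 2 * n + 1),
        |cEntry n₁ (N - n₁) n|
      < |cEntry (2 * n + 1) (N - (2 * n + 1)) n| := by
  obtain ⟨p, hp⟩ := hNeven
  set T := (Icc 3 (N - 3)).filter (fun n₁ => Odd n₁ ∧ n₁ ≠ 2 * n + 1)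
  have hT : ∀ n₁ ∈ T, 3 ≤ n₁ ∧ n₁ ≤ N - 3 ∧ Odd n₁ ∧ n₁ ≠ 2 * n + 1 := by
    intro n₁ hn₁
    simp only [T, mem_filter, mem_Icc] at hn₁
    exact ⟨hn₁.1.1, hn₁.1.2, hn₁.2⟩
  have hfirst : ∑ n₁ ∈ T, (2 * n).choose (n₁ - 1) ≤ 2 ^ (2 * n - 1) := by
    refine Nat.sum_choose_le_of_injOn_even (fun x hx y hy hxy => ?_) (fun n₁ hn₁ => ?_) (by omega)
    · have := hT x hx; have := hT y hy; omega
    · obtain ⟨-, -, ⟨j, hj⟩, -⟩ := hT n₁ hn₁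
      exact ⟨j, by omega⟩
  have hsecond : ∑ n₁ ∈ T, (2 * n).choose (N - n₁ - 1) ≤ 2 ^ (2 * n - 1) := by
    refine Nat.sum_choose_le_of_injOn_even (fun x hx y hy hxy => ?_) (fun n₁ hn₁ => ?_) (by omega)
    · have := hT x hx; have := hT y hy; omega
    · obtain ⟨-, -, ⟨j, hj⟩, -⟩ := hT n₁ hn₁
      exact ⟨p - j - 1, by omega⟩
  have hpow : (2 : ℤ) ^ (2 * n + 1) = 4 * 2 ^ (2 * n - 1) := by
    rw [show 2 * n + 1 = 2 * n - 1 + 2 by omega, pow_add]; ring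
  have hgrow : (1 : ℤ) < 2 ^ (2 * n - 1) := one_lt_pow₀ one_lt_two (by omega)
  calc ∑ n₁ ∈ T, |cEntry n₁ (N - n₁) n|
      ≤ ∑ n₁ ∈ T, (((2 * n).choose (n₁ - 1) + (2 * n).choose (N - n₁ - 1) : ℕ) : ℤ) :=
        sum_le_sum fun n₁ hn₁ => abs_cEntry_le_of_ne (by have := hT n₁ hn₁; omega)
    _ ≤ 2 ^ (2 * n - 1) + 2 ^ (2 * n - 1) := by
        rw [← Nat.cast_sum, sum_add_distrib]
        exact_mod_cast Nat.add_le_add hfirst hsecond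
    _ < 2 ^ (2 * n + 1) - 2 := by linarith
    _ ≤ |cEntry (2 * n + 1) (N - (2 * n + 1)) n| := two_pow_sub_two_le_abs_cEntry_diag _ _

theorem stmt_17 (N : ℕ) (hN : 4 ≤ N) (hNeven : Even N) (n : ℕ)
    (h1 : 3 ≤ 2 * n + 1) (h2 : 2 * n + 1 ≤ N - 3) :
    ∑ n₁ ∈ (Finset.Icc 3 (N - 3)).filter (fun n₁ => Odd n₁ ∧ n₁ ≠ 2 * n + 1),
        |cEntry n₁ (N - n₁) n|
      < |cEntry (2 * n + 1) (N - (2 * n + 1)) n| :=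
  stmt_17_general N hNeven n h1
end
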